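/- arXiv:0812.1817 — 6 statements merged into one kernel-verified Lean document; each statement's English description precedes it below -/
import Mathlib

section
/- Let A, B, C be n×n complex matrices with A Hermitian and B skew-Hermitian. Let F = (C+C*)/2 and G = -i(C-C*)/2, and let U, V be unitaries such that U F U* = diag(f_1,...,f_n) with f_1 ≥ ... ≥ f_n and V G V* = diag(g_1,...,g_n) with g_1 ≥ ... ≥ g_n. Let A have eigenvalues a_1 ≥ ... ≥ a_n and let -iB have eigenvalues b_1 ≥ ... ≥ b_n, and let A_1 = diag(a_1,...,a_n), B_1 = i·diag(b_1,...,b_n). Then ‖U*A_1U + V*B_1V − C‖² = Σ_j (|f_j − a_j|² + |g_j − b_j|²) in the Frobenius norm. -/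
/-!
Write `C = F + i G` with `F`, `G` Hermitian. Undoing the two diagonalisations, the residual is
`H + i S` with `H = U* (A₁ - diag f) U` and `S = V* (diag b - diag g) V`, both Hermitian. For
Hermitian `H`, `S` the cross terms `i (tr HS - tr SH)` of `‖H + i S‖²` cancel, so
`‖H + i S‖² = ‖H‖² + ‖S‖²`, and unitary conjugation leaves each summand equal to the squared norm
of a real diagonal matrix.
-/

open Matrix

/-- Squared Frobenius norm of a complex matrix. -/
noncomputable def frobSq {n : ℕ} (X : Matrix (Fin n) (Fin n) ℂ) : ℝ :=
  (Matrix.trace (Xᴴ * X)).re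

namespace Matrix

theorem eq_conjTranspose_mul_mul_of_mul_mul_conjTranspose_eq {m R : Type*} [Fintype m]
    [DecidableEq m] [CommRing R] [StarRing R]
    {U X D : Matrix m m R} (hU : U ∈ unitaryGroup m R) (h : U * X * Uᴴ = D) :
    X = Uᴴ * D * U := by
  have hUU : Uᴴ * U = 1 := Unitary.star_mul_self_of_mem hU
  rw [← h, ← mul_assoc, ← mul_assoc, hUU, one_mul, mul_assoc, hUU, mul_one]

theorem half_smul_add_conjTranspose_add_I_smul {m : Type*} (C : Matrix m m ℂ) :
    (1 / 2 : ℂ) • (C + Cᴴ) + Complex.I • ((-Complex.I / 2 : ℂ) • (C - Cᴴ)) = C := by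
  have hI : Complex.I * (-Complex.I / 2) = 1 / 2 := by
    rw [mul_div_assoc', mul_neg, Complex.I_mul_I, neg_neg]
  rw [smul_smul, hI]
  module

theorem isHermitian_diagonal_ofReal {m : Type*} [DecidableEq m] (d : m → ℝ) :
    (diagonal fun i => (d i : ℂ)).IsHermitian :=
  isHermitian_diagonal_iff.2 fun i => Complex.conj_ofReal (d i)

end Matrix

theorem frobSq_conjTranspose_mul_mul {n : ℕ} {U : Matrix (Fin n) (Fin n) ℂ}
    (hU : U ∈ unitaryGroup (Fin n) ℂ) (X : Matrix (Fin n) (Fin n) ℂ) :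
    frobSq (Uᴴ * X * U) = frobSq X := by
  have hUU : U * Uᴴ = 1 := Unitary.mul_star_self_of_mem hU
  have : (Uᴴ * X * U)ᴴ * (Uᴴ * X * U) = Uᴴ * (Xᴴ * X) * U := by
    simp only [conjTranspose_mul, conjTranspose_conjTranspose, mul_assoc]
    rw [← mul_assoc U, hUU, one_mul]
  rw [frobSq, frobSq, this, trace_mul_cycle, ← mul_assoc, hUU, one_mul]

theorem frobSq_add_I_smul {n : ℕ} {H S : Matrix (Fin n) (Fin n) ℂ}
    (hH : H.IsHermitian) (hS : S.IsHermitian) :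
    frobSq (H + Complex.I • S) = frobSq H + frobSq S := by
  have htr : ((H + Complex.I • S)ᴴ * (H + Complex.I • S)).trace
      = (Hᴴ * H).trace + (Sᴴ * S).trace := by
    rw [conjTranspose_add, conjTranspose_smul, hH.eq, hS.eq, Complex.star_def, Complex.conj_I]
    simp only [add_mul, mul_add, Matrix.smul_mul, Matrix.mul_smul, smul_smul, trace_add, trace_smul,
      smul_eq_mul, trace_mul_comm S H]
    ring_nf
    rw [Complex.I_sq]
    ring
  rw [frobSq, htr, Complex.add_re, frobSq, frobSq]

theorem frobSq_diagonal_ofReal {n : ℕ} (d : Fin n → ℝ) :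
    frobSq (diagonal fun i => (d i : ℂ)) = ∑ i, d i ^ 2 := by
  rw [frobSq, (isHermitian_diagonal_ofReal d).eq, diagonal_mul_diagonal, trace_diagonal,
    Complex.re_sum]
  simp [sq]

theorem stmt0_general {n : ℕ} (C : Matrix (Fin n) (Fin n) ℂ)
    (f g a b : Fin n → ℝ)
    (U V : Matrix (Fin n) (Fin n) ℂ)
    (hU : U ∈ Matrix.unitaryGroup (Fin n) ℂ) (hV : V ∈ Matrix.unitaryGroup (Fin n) ℂ)
    (hUF : U * ((1 / 2 : ℂ) • (C + Cᴴ)) * Uᴴ = Matrix.diagonal (fun i => (f i : ℂ)))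
    (hVG : V * ((-Complex.I / 2 : ℂ) • (C - Cᴴ)) * Vᴴ = Matrix.diagonal (fun i => (g i : ℂ))) :
    frobSq (Uᴴ * Matrix.diagonal (fun i => (a i : ℂ)) * U +
        Vᴴ * (Complex.I • Matrix.diagonal (fun i => (b i : ℂ))) * V - C) =
      ∑ j, ((f j - a j) ^ 2 + (g j - b j) ^ 2) := by
  have hC := half_smul_add_conjTranspose_add_I_smul C
  rw [eq_conjTranspose_mul_mul_of_mul_mul_conjTranspose_eq hU hUF,
    eq_conjTranspose_mul_mul_of_mul_mul_conjTranspose_eq hV hVG] at hC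
  have hres : Uᴴ * diagonal (fun i => (a i : ℂ)) * U +
        Vᴴ * (Complex.I • diagonal (fun i => (b i : ℂ))) * V - C =
      Uᴴ * diagonal (fun i => ((a i - f i : ℝ) : ℂ)) * U +
        Complex.I • (Vᴴ * diagonal (fun i => ((b i - g i : ℝ) : ℂ)) * V) := by
    simp only [← hC, Complex.ofReal_sub, ← diagonal_sub, Matrix.mul_sub, Matrix.sub_mul,
      Matrix.mul_smul, Matrix.smul_mul, smul_sub]
    abel
  rw [hres, frobSq_add_I_smul (isHermitian_conjTranspose_mul_mul U (isHermitian_diagonal_ofReal _))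
      (isHermitian_conjTranspose_mul_mul V (isHermitian_diagonal_ofReal _)),
    frobSq_conjTranspose_mul_mul hU, frobSq_conjTranspose_mul_mul hV,
    frobSq_diagonal_ofReal, frobSq_diagonal_ofReal, ← Finset.sum_add_distrib]
  congr 1 with j
  ring

theorem stmt0 {n : ℕ} (A B C : Matrix (Fin n) (Fin n) ℂ)
    (hA : A.IsHermitian) (hB : Bᴴ = -B)
    (f g a b : Fin n → ℝ)
    (hf : Antitone f) (hg : Antitone g) (ha : Antitone a) (hb : Antitone b)
    (U V : Matrix (Fin n) (Fin n) ℂ)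
    (hU : U ∈ Matrix.unitaryGroup (Fin n) ℂ) (hV : V ∈ Matrix.unitaryGroup (Fin n) ℂ)
    (hUF : U * ((1 / 2 : ℂ) • (C + Cᴴ)) * Uᴴ = Matrix.diagonal (fun i => (f i : ℂ)))
    (hVG : V * ((-Complex.I / 2 : ℂ) • (C - Cᴴ)) * Vᴴ = Matrix.diagonal (fun i => (g i : ℂ)))
    (haA : ∃ W ∈ Matrix.unitaryGroup (Fin n) ℂ,
      W * A * Wᴴ = Matrix.diagonal (fun i => (a i : ℂ)))
    (hbB : ∃ W ∈ Matrix.unitaryGroup (Fin n) ℂ,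
      W * ((-Complex.I) • B) * Wᴴ = Matrix.diagonal (fun i => (b i : ℂ))) :
    frobSq (Uᴴ * Matrix.diagonal (fun i => (a i : ℂ)) * U +
        Vᴴ * (Complex.I • Matrix.diagonal (fun i => (b i : ℂ))) * V - C) =
      ∑ j, ((f j - a j) ^ 2 + (g j - b j) ^ 2) :=
  stmt0_general C f g a b U V hU hV hUF hVG
end

section
/- Let a_0, a_1, ..., a_N be positive real numbers. There exist real numbers t_1, ..., t_N such that a_0 = Σ_{j=1}^N a_j e^{i t_j} if and only if for every k ∈ {0, 1, ..., N}, Σ_{j=0}^N a_j − 2 a_k ≥ 0. -/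
/-!
Necessity is the triangle inequality: moving `a 0` to the other side gives `N + 1` vectors
of lengths `a k` summing to zero, and each of them is at most the sum of the others.

Sufficiency is by induction on the number of sides, with an arbitrary complex target `w`.
To place a side of length `a k`, turn it through an angle `θ` so that the remainder
`w - a k e^{iθ}` has length `min (‖w‖ + a k) S`, where `S` is the total length of the
remaining sides; the polygon inequalities then hold for the smaller problem. Such a `θ`
exists by the intermediate value theorem, since `‖w - a e^{iθ}‖` runs from `|‖w‖ - a|`
to `‖w‖ + a` as `θ` goes from `arg w` to `arg w + π`.
-/

open Complex Finset

theorem two_mul_norm_le_sum_norm_of_sum_eq_zero {ι E : Type*} [Fintype ι]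
    [SeminormedAddCommGroup E] {z : ι → E} (hz : ∑ i, z i = 0) (k : ι) :
    2 * ‖z k‖ ≤ ∑ i, ‖z i‖ := by
  classical
  have hk : z k = -∑ i ∈ univ.erase k, z i := by
    rw [eq_neg_iff_add_eq_zero, add_sum_erase _ _ (mem_univ k), hz]
  have hle : ‖z k‖ ≤ ∑ i ∈ univ.erase k, ‖z i‖ := by
    rw [hk, norm_neg]
    exact norm_sum_le _ _
  rw [← add_sum_erase _ _ (mem_univ k)]
  linarith

theorem norm_ofReal_mul_exp_I_mul (x t : ℝ) : ‖(x : ℂ) * exp (I * t)‖ = |x| := by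
  rw [norm_mul, norm_real, Real.norm_eq_abs, mul_comm I, norm_exp_ofReal_mul_I, mul_one]

theorem exists_norm_sub_ofReal_mul_exp_eq (w : ℂ) {a ρ : ℝ} (h₁ : |‖w‖ - a| ≤ ρ)
    (h₂ : ρ ≤ ‖w‖ + a) : ∃ θ : ℝ, ‖w - a * exp (I * θ)‖ = ρ := by
  have hw : w = ‖w‖ * exp (I * arg w) := by
    rw [mul_comm I]
    exact (norm_mul_exp_arg_mul_I w).symm
  set r := ‖w‖
  set φ := arg w
  have h_arg : ‖w - a * exp (I * φ)‖ = |r - a| := by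
    rw [← norm_ofReal_mul_exp_I_mul (r - a) φ, hw]
    push_cast
    congr 1
    ring
  have h_opp : ‖w - a * exp (I * ↑(φ + Real.pi))‖ = |r + a| := by
    rw [← norm_ofReal_mul_exp_I_mul (r + a) φ, hw]
    push_cast
    rw [mul_add, exp_add, mul_comm I Real.pi, exp_pi_mul_I]
    congr 1
    ring
  have hcont : Continuous fun θ : ℝ => ‖w - a * exp (I * θ)‖ := by fun_prop
  obtain ⟨θ, hθ⟩ := intermediate_value_univ φ (φ + Real.pi) hcont
    ⟨h_arg ▸ h₁, h_opp ▸ h₂.trans (le_abs_self _)⟩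
  exact ⟨θ, hθ⟩

theorem exists_eq_sum_ofReal_mul_exp {ι : Type*} (s : Finset ι) {a : ι → ℝ}
    (ha : ∀ j ∈ s, 0 ≤ a j) (w : ℂ) (hw : ‖w‖ ≤ ∑ j ∈ s, a j)
    (hs : ∀ j ∈ s, 2 * a j ≤ ‖w‖ + ∑ i ∈ s, a i) :
    ∃ t : ι → ℝ, w = ∑ j ∈ s, a j * exp (I * t j) := by
  classical
  induction s using Finset.induction_on generalizing w with
  | empty => exact ⟨0, by simpa using hw⟩
  | insert k s hk ih =>
    rw [sum_insert hk] at hw hs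
    set S := ∑ i ∈ s, a i
    have hak := ha k (mem_insert_self k s)
    have hak2 := hs k (mem_insert_self k s)
    have hS : 0 ≤ S := sum_nonneg fun j hj => ha j (mem_insert_of_mem hj)
    have hw0 := norm_nonneg w
    set ρ := min (‖w‖ + a k) S
    have hρ : |‖w‖ - a k| ≤ ρ :=
      abs_sub_le_iff.2 ⟨le_min (by linarith) (by linarith), le_min (by linarith) (by linarith)⟩
    obtain ⟨θ, hθ⟩ := exists_norm_sub_ofReal_mul_exp_eq w hρ (min_le_left _ _)
    have hs' : ∀ j ∈ s, 2 * a j ≤ ρ + S := fun j hj => by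
      have hj2 := hs j (mem_insert_of_mem hj)
      have hjS : a j ≤ S := single_le_sum (fun i hi => ha i (mem_insert_of_mem hi)) hj
      linarith [show 2 * a j - S ≤ ρ from le_min (by linarith) (by linarith)]
    obtain ⟨t, ht⟩ := ih (fun j hj => ha j (mem_insert_of_mem hj)) (w - a k * exp (I * θ))
      (hθ ▸ min_le_right _ _) (hθ ▸ hs')
    refine ⟨Function.update t k θ, ?_⟩
    rw [sum_insert hk, Function.update_self,
      sum_congr rfl fun j hj => by rw [Function.update_of_ne (ne_of_mem_of_not_mem hj hk)], ← ht]
    ring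

theorem stmt3 {N : ℕ} (a : Fin (N + 1) → ℝ) (ha : ∀ k, 0 < a k) :
    (∃ t : Fin N → ℝ,
        (a 0 : ℂ) = ∑ j : Fin N, (a j.succ : ℂ) * Complex.exp (Complex.I * t j)) ↔
      ∀ k : Fin (N + 1), 0 ≤ (∑ j, a j) - 2 * a k := by
  simp only [Fin.sum_univ_succ a, sub_nonneg]
  constructor
  · rintro ⟨t, ht⟩ k
    set z : Fin (N + 1) → ℂ := Fin.cons (-(a 0 : ℂ)) fun j => a j.succ * exp (I * t j)
    have hz : ∑ i, z i = 0 := by rw [Fin.sum_cons, ← ht, neg_add_cancel]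
    have hnorm : ∀ i, ‖z i‖ = a i := Fin.cases
      (by simp [z, abs_of_pos (ha 0)])
      fun j => by simp [z, abs_of_pos (ha j.succ)]
    have := two_mul_norm_le_sum_norm_of_sum_eq_zero hz k
    simpa only [hnorm, Fin.sum_univ_succ] using this
  · intro h
    have ha0 : ‖(a 0 : ℂ)‖ = a 0 := by simp [abs_of_pos (ha 0)]
    refine exists_eq_sum_ofReal_mul_exp univ (fun j _ => (ha j.succ).le) (a 0 : ℂ) ?_
      fun j _ => ?_
    · linarith [h 0]
    · linarith [h j.succ]
end

section
/- Let A_j = diag(a_{1j}, ..., a_{nj}) be nonnegative real diagonal n×n matrices for j = 0, 1, ..., N. There exist permutation matrices P_1, ..., P_N and diagonal unitary matrices D_1, ..., D_N such that A_0 = Σ_{j=1}^N D_j P_j A_j P_j^t if and only if for each row index i, the entries a_{i0}, (P_1 v_1)_i, ..., (P_N v_N)_i (where v_j = (a_{1j},...,a_{nj})^t) satisfy the polygon inequalities: each entry is at most the sum of the others. -/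
/-!
Conjugating a diagonal matrix by a permutation matrix permutes its diagonal, so the matrix
identity splits into one scalar identity `a₀ = ∑ⱼ e^{i tⱼ} cⱼ` per row, with `cⱼ = a_{j, σⱼ i}`.
Such an identity forces the polygon inequalities by the triangle inequality, applied to the
vanishing sum `-a₀ + ∑ⱼ e^{i tⱼ} cⱼ`. Conversely, by induction on the number of sides: `a₀` and
`c₁` are merged into `b = min (a₀ + c₁) (c₂ + ⋯ + cₘ)`, which keeps both the triangle
`(a₀, b, c₁)` and the shorter polygon `(b, c₂, …, cₘ)` closable; a triangle closes because
`θ ↦ ‖a₀ - e^{iθ} b‖` runs from `|a₀ - b|` to `a₀ + b` on `[0, π]`.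
-/

open Matrix Complex Finset

lemma two_mul_norm_le_sum_norm_of_sum_eq_zero_s5 {ι E : Type*} [SeminormedAddCommGroup E]
    {s : Finset ι} {w : ι → E} (hw : ∑ l ∈ s, w l = 0) {k : ι} (hk : k ∈ s) :
    2 * ‖w k‖ ≤ ∑ l ∈ s, ‖w l‖ := by
  classical
  have hsplit := Finset.add_sum_erase s w hk
  have hsplit_norm := Finset.add_sum_erase s (fun l => ‖w l‖) hk
  have : ‖w k‖ ≤ ∑ l ∈ s.erase k, ‖w l‖ := calc
    ‖w k‖ = ‖∑ l ∈ s.erase k, w l‖ := by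
      rw [← norm_neg, eq_neg_of_add_eq_zero_left (hsplit.trans hw), neg_neg]
    _ ≤ ∑ l ∈ s.erase k, ‖w l‖ := norm_sum_le _ _
  linarith

lemma exists_eq_exp_mul_add_exp_mul_of_triangle {a b c : ℝ} (ha : 0 ≤ a) (hb : 0 ≤ b)
    (hab : a ≤ b + c) (hba : b ≤ a + c) (hc : c ≤ a + b) :
    ∃ s r : ℝ, (a : ℂ) = exp (I * s) * b + exp (I * r) * c := by
  set f : ℝ → ℝ := fun θ => ‖(a : ℂ) - b * exp (I * θ)‖
  have hf0 : f 0 = |a - b| := by simp [f, ← ofReal_sub]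
  have hfπ : f Real.pi = a + b := by
    simp [f, mul_comm I, ← ofReal_add, abs_of_nonneg (add_nonneg ha hb)]
  obtain ⟨s, -, hs⟩ := intermediate_value_Icc Real.pi_pos.le (f := f) (by fun_prop)
    (show c ∈ Set.Icc (f 0) (f Real.pi) from
      ⟨hf0 ▸ abs_sub_le_iff.mpr ⟨by linarith, by linarith⟩, hfπ ▸ hc⟩)
  refine ⟨s, arg ((a : ℂ) - b * exp (I * s)), ?_⟩
  have hpolar := norm_mul_exp_arg_mul_I ((a : ℂ) - b * exp (I * s))
  rw [show ‖(a : ℂ) - b * exp (I * s)‖ = c from hs, mul_comm _ I] at hpolar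
  linear_combination -hpolar

theorem exists_eq_sum_exp_mul_of_polygon : ∀ {m : ℕ} {a : ℝ} {c : Fin m → ℝ}, 0 ≤ a →
    (∀ j, 0 ≤ c j) → a ≤ ∑ j, c j → (∀ j, 2 * c j ≤ a + ∑ i, c i) →
    ∃ t : Fin m → ℝ, (a : ℂ) = ∑ j, exp (I * t j) * c j
  | 0, a, _, ha, _, hsum, _ =>
    ⟨Fin.elim0, by simpa using le_antisymm (by simpa using hsum) ha⟩
  | m + 1, a, c, ha, hc, hsum, hpoly => by
    set S := ∑ j : Fin m, c j.succ
    have hS : ∀ j, c (Fin.succ j) ≤ S := fun j =>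
      single_le_sum (f := fun j => c j.succ) (fun j _ => hc _) (mem_univ j)
    have hsplit : ∑ j, c j = c 0 + S := Fin.sum_univ_succ c
    rw [hsplit] at hsum hpoly
    have h0 := hpoly 0
    set b := min (a + c 0) S
    have hb : b = a + c 0 ∨ b = S := min_choice _ _
    obtain ⟨t, ht⟩ := exists_eq_sum_exp_mul_of_polygon (a := b) (c := fun j => c j.succ)
      (le_min (by linarith [hc 0]) (sum_nonneg fun j _ => hc _)) (fun j => hc _)
      (min_le_right _ _) fun j => by
        have := hpoly j.succ; have := hS j
        rcases hb with hb | hb <;> linarith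
    obtain ⟨s, r, hsr⟩ := exists_eq_exp_mul_add_exp_mul_of_triangle (b := b) (c := c 0) ha
      (le_min (by linarith [hc 0]) (sum_nonneg fun j _ => hc _))
      (by rcases hb with hb | hb <;> linarith [hc 0]) (min_le_left _ _)
      (by rcases hb with hb | hb <;> linarith [hc 0])
    refine ⟨Fin.cons r fun j => t j + s, ?_⟩
    rw [hsr, ht, Fin.sum_univ_succ, mul_sum, add_comm]
    simp only [Fin.cons_zero, Fin.cons_succ, ofReal_add, mul_add, exp_add]
    exact congrArg₂ _ rfl (sum_congr rfl fun j _ => by ring)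

theorem exists_eq_sum_exp_mul_iff_polygon {m : ℕ} {c : Fin (m + 1) → ℝ} (hc : ∀ k, 0 ≤ c k) :
    (∃ t : Fin m → ℝ, (c 0 : ℂ) = ∑ j, exp (I * t j) * c j.succ) ↔
      ∀ k, 2 * c k ≤ ∑ l, c l := by
  rw [Fin.sum_univ_succ]
  constructor
  · rintro ⟨t, ht⟩ k
    let w : Fin (m + 1) → ℂ := Fin.cons (-(c 0 : ℂ)) fun j => exp (I * t j) * c j.succ
    have hw : ∑ l, w l = 0 := by simp [w, Fin.sum_univ_succ, ← ht]
    have hnorm : ∀ l, ‖w l‖ = c l := Fin.cases (by simp [w, abs_of_nonneg (hc 0)]) fun j => by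
      simp [w, abs_of_nonneg (hc _)]
    simpa [hnorm, Fin.sum_univ_succ] using
      two_mul_norm_le_sum_norm_of_sum_eq_zero_s5 hw (mem_univ k)
  · intro h
    exact exists_eq_sum_exp_mul_of_polygon (hc 0) (fun j => hc _) (by linarith [h 0])
      fun j => h j.succ

lemma diagonal_mul_permMatrix_mul_diagonal_mul_transpose {n R : Type*} [Fintype n]
    [DecidableEq n] [Semiring R] (σ : Equiv.Perm n) (e d : n → R) :
    diagonal e * σ.permMatrix R * diagonal d * (σ.permMatrix R)ᵀ =
      diagonal (fun i => e i * d (σ i)) := by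
  rw [Matrix.mul_assoc, Matrix.mul_assoc, ← Matrix.mul_assoc (σ.permMatrix R),
    PEquiv.toMatrix_toPEquiv_mul, transpose_permMatrix, Equiv.Perm.permMatrix,
    PEquiv.mul_toMatrix_toPEquiv, submatrix_submatrix]
  simp only [Function.comp_id, Function.id_comp, Equiv.Perm.inv_def, Equiv.symm_symm]
  rw [submatrix_diagonal_equiv, diagonal_mul_diagonal]
  rfl

lemma sum_diagonal {ι n α : Type*} [DecidableEq n] [AddCommMonoid α] (s : Finset ι)
    (d : ι → n → α) : ∑ j ∈ s, diagonal (d j) = diagonal fun i => ∑ j ∈ s, d j i := by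
  rw [← Finset.sum_fn]
  exact (map_sum (diagonalAddMonoidHom n α) d s).symm

theorem stmt5 {n N : ℕ} (a : Fin (N + 1) → Fin n → ℝ) (ha : ∀ j i, 0 ≤ a j i) :
    (∃ (σ : Fin N → Equiv.Perm (Fin n)) (t : Fin N → Fin n → ℝ),
        Matrix.diagonal (fun i => (a 0 i : ℂ)) =
          ∑ j : Fin N,
            Matrix.diagonal (fun i => Complex.exp (Complex.I * t j i)) *
              ((σ j).permMatrix ℂ) *
              Matrix.diagonal (fun i => (a j.succ i : ℂ)) *
              ((σ j).permMatrix ℂ)ᵀ) ↔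
      ∃ σ : Fin N → Equiv.Perm (Fin n), ∀ i : Fin n, ∀ k : Fin (N + 1),
        2 * (Fin.cases (motive := fun _ => ℝ) (a 0 i) (fun j => a j.succ ((σ j) i)) k) ≤
          ∑ l : Fin (N + 1), Fin.cases (motive := fun _ => ℝ) (a 0 i) (fun j => a j.succ ((σ j) i)) l := by
  simp only [diagonal_mul_permMatrix_mul_diagonal_mul_transpose, sum_diagonal,
    diagonal_eq_diagonal_iff]
  refine exists_congr fun σ => ?_
  rw [forall_congr' fun i => (exists_eq_sum_exp_mul_iff_polygon
    (c := Fin.cases (a 0 i) fun j => a j.succ (σ j i))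
    (Fin.cases (ha 0 i) fun j => ha j.succ _)).symm]
  simp only [Fin.cases_zero, Fin.cases_succ]
  exact ⟨fun ⟨t, ht⟩ i => ⟨fun j => t j i, ht i⟩,
    fun h => by choose t ht using h; exact ⟨fun j i => t i j, ht⟩⟩
end

section
/- Let A, B ∈ M_n and let ‖·‖ be any unitarily invariant norm on M_n. Then for all invertible S, T ∈ M_n: ‖((tr A − tr B)/n) · I‖ ≤ ‖S^{-1} A S − T^{-1} B T‖. -/
/-!
Write `X = S⁻¹ A S - T⁻¹ B T`, so that `tr X = tr A - tr B`. Averaging the conjugates of `X` by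
the `2ⁿ` diagonal sign matrices kills the off-diagonal entries, and averaging the conjugates of a
diagonal matrix by the `n` cyclic shifts replaces every diagonal entry by their mean. Hence
`(tr X / n) • 1` is an average of unitary conjugates of `X`, and the triangle inequality together
with unitary invariance bounds its norm by that of `X`.
-/

open Matrix

section UnitaryAveraging

variable {m : Type*} [Fintype m] [DecidableEq m]

theorem Matrix.apply_le_of_card_smul_eq_sum_unitary_conj {ν : Matrix m m ℂ → ℝ}
    (hνadd : ∀ X Y, ν (X + Y) ≤ ν X + ν Y)
    (hνsmul : ∀ (c : ℂ) X, ν (c • X) = ‖c‖ * ν X)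
    (hνinv : ∀ X, ∀ U ∈ unitaryGroup m ℂ, ∀ V ∈ unitaryGroup m ℂ, ν (U * X * V) = ν X)
    {ι : Type*} [Fintype ι] [Nonempty ι] (U : ι → Matrix m m ℂ)
    (hU : ∀ i, U i ∈ unitaryGroup m ℂ) {X Y : Matrix m m ℂ}
    (hY : (Fintype.card ι : ℂ) • Y = ∑ i, U i * X * star (U i)) :
    ν Y ≤ ν X := by
  have hν0 : ν 0 = 0 := by simpa using hνsmul 0 0
  refine le_of_mul_le_mul_left ?_ (Nat.cast_pos.mpr Fintype.card_pos : (0 : ℝ) < Fintype.card ι)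
  calc (Fintype.card ι : ℝ) * ν Y = ν ((Fintype.card ι : ℂ) • Y) := by
        rw [hνsmul, Complex.norm_natCast]
    _ = ν (∑ i, U i * X * star (U i)) := by rw [hY]
    _ ≤ ∑ i, ν (U i * X * star (U i)) := Finset.le_sum_of_subadditive ν hν0.le hνadd _ _
    _ = ∑ _i : ι, ν X := Finset.sum_congr rfl fun i _ =>
        hνinv X _ (hU i) _ (Unitary.star_mem (hU i))
    _ = Fintype.card ι * ν X := by simp

end UnitaryAveraging

section Pinching

variable {m : Type*} [DecidableEq m]

def Matrix.signDiagonal (ε : m → ℤˣ) : Matrix m m ℂ :=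
  diagonal fun i => ((ε i : ℤ) : ℂ)

theorem Matrix.star_signDiagonal (ε : m → ℤˣ) : star (signDiagonal ε) = signDiagonal ε := by
  simp [signDiagonal, star_eq_conjTranspose, diagonal_conjTranspose]

variable [Fintype m]

theorem sum_units_int_apply_mul_apply (a b : m) :
    ∑ ε : m → ℤˣ, ((ε a * ε b : ℤˣ) : ℤ) = if a = b then 2 ^ Fintype.card m else 0 := by
  split_ifs with hab
  · subst hab
    simp [Fintype.card_units_int]
  · -- flipping the sign of the `a`-th coordinate negates every summand
    have hneg :
        ∑ ε : m → ℤˣ, ((ε a * ε b : ℤˣ) : ℤ) = -∑ ε : m → ℤˣ, ((ε a * ε b : ℤˣ) : ℤ) := by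
      conv_lhs => rw [← Equiv.sum_comp (Equiv.mulLeft (Pi.mulSingle a (-1) : m → ℤˣ))]
      simp [Ne.symm hab, ← Finset.sum_neg_distrib]
    omega

theorem Matrix.signDiagonal_mem_unitaryGroup (ε : m → ℤˣ) :
    signDiagonal ε ∈ unitaryGroup m ℂ := by
  rw [mem_unitaryGroup_iff, star_signDiagonal, signDiagonal, diagonal_mul_diagonal,
    ← diagonal_one]
  congr 1
  ext i
  simp [← Int.cast_mul]

theorem Matrix.sum_signDiagonal_conj (X : Matrix m m ℂ) :
    ∑ ε : m → ℤˣ, signDiagonal ε * X * star (signDiagonal ε)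
      = (2 ^ Fintype.card m : ℂ) • diagonal X.diag := by
  ext a b
  have hsum := congrArg (Int.cast : ℤ → ℂ) (sum_units_int_apply_mul_apply a b)
  push_cast at hsum
  calc (∑ ε : m → ℤˣ, signDiagonal ε * X * star (signDiagonal ε)) a b
      = (∑ ε : m → ℤˣ, ((ε a : ℤ) : ℂ) * ε b) * X a b := by
        simp_rw [star_signDiagonal]
        simp [sum_apply, signDiagonal, diagonal_mul, mul_diagonal, Finset.sum_mul]
        exact Finset.sum_congr rfl fun _ _ => by ring
    _ = ((2 ^ Fintype.card m : ℂ) • diagonal X.diag) a b := by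
      rw [hsum]
      split_ifs with hab <;> simp [hab]

end Pinching

section CyclicAveraging

variable {m R : Type*} [DecidableEq m] [CommRing R] [StarRing R]

theorem Matrix.permMatrix_mem_unitaryGroup [Fintype m] (σ : Equiv.Perm m) :
    σ.permMatrix R ∈ unitaryGroup m R := by
  rw [mem_unitaryGroup_iff, star_eq_conjTranspose, conjTranspose_permMatrix, ← permMatrix_mul,
    inv_mul_cancel, permMatrix_one]

theorem Matrix.permMatrix_mul_mul_star_permMatrix [Fintype m] (σ : Equiv.Perm m)
    (M : Matrix m m R) : σ.permMatrix R * M * star (σ.permMatrix R) = M.submatrix σ σ := by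
  rw [star_eq_conjTranspose, conjTranspose_permMatrix, Equiv.Perm.permMatrix,
    Equiv.Perm.permMatrix, PEquiv.toMatrix_toPEquiv_mul, PEquiv.mul_toMatrix_toPEquiv,
    submatrix_submatrix]
  rfl

theorem Matrix.sum_permMatrix_addRight_conj_diagonal {G : Type*} [AddGroup G] [Fintype G]
    [DecidableEq G] (d : G → R) :
    ∑ k : G, (Equiv.addRight k).permMatrix R * diagonal d * star ((Equiv.addRight k).permMatrix R)
      = (∑ i, d i) • 1 := by
  simp_rw [permMatrix_mul_mul_star_permMatrix, submatrix_diagonal_equiv, smul_one_eq_diagonal]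
  ext a b
  by_cases hab : a = b
  · subst hab
    simpa [sum_apply] using Equiv.sum_comp (Equiv.addLeft a) d
  · simp [sum_apply, hab]

end CyclicAveraging

theorem stmt9_general {n : ℕ} (hn : 0 < n) (A B : Matrix (Fin n) (Fin n) ℂ)
    (ν : Matrix (Fin n) (Fin n) ℂ → ℝ)
    (hνadd : ∀ X Y, ν (X + Y) ≤ ν X + ν Y)
    (hνsmul : ∀ (c : ℂ) X, ν (c • X) = ‖c‖ * ν X)
    (hνinv : ∀ X, ∀ U ∈ Matrix.unitaryGroup (Fin n) ℂ, ∀ V ∈ Matrix.unitaryGroup (Fin n) ℂ,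
      ν (U * X * V) = ν X)
    (S T : Matrix (Fin n) (Fin n) ℂ) (hS : IsUnit S) (hT : IsUnit T) :
    ν (((Matrix.trace A - Matrix.trace B) / n) • (1 : Matrix (Fin n) (Fin n) ℂ)) ≤
      ν (S⁻¹ * A * S - T⁻¹ * B * T) := by
  have : NeZero n := ⟨hn.ne'⟩
  set X := S⁻¹ * A * S - T⁻¹ * B * T
  have htr : trace X = trace A - trace B := by rw [trace_sub, trace_conj' hS, trace_conj' hT]
  calc ν (((trace A - trace B) / n) • 1)
      ≤ ν (diagonal X.diag) :=
        apply_le_of_card_smul_eq_sum_unitary_conj hνadd hνsmul hνinv _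
          (fun k : Fin n => permMatrix_mem_unitaryGroup _) <| by
            rw [sum_permMatrix_addRight_conj_diagonal, smul_smul, Fintype.card_fin,
              mul_div_cancel₀ _ (Nat.cast_ne_zero.mpr hn.ne'), ← htr]
            rfl
    _ ≤ ν X :=
        apply_le_of_card_smul_eq_sum_unitary_conj hνadd hνsmul hνinv _
          signDiagonal_mem_unitaryGroup <| by
          rw [sum_signDiagonal_conj, Fintype.card_fun, Fintype.card_units_int, Fintype.card_fin]
          norm_cast

theorem stmt9 {n : ℕ} (hn : 0 < n) (A B : Matrix (Fin n) (Fin n) ℂ)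
    (ν : Matrix (Fin n) (Fin n) ℂ → ℝ)
    (hν₀ : ∀ X, ν X = 0 ↔ X = 0)
    (hνadd : ∀ X Y, ν (X + Y) ≤ ν X + ν Y)
    (hνsmul : ∀ (c : ℂ) X, ν (c • X) = ‖c‖ * ν X)
    (hνinv : ∀ X, ∀ U ∈ Matrix.unitaryGroup (Fin n) ℂ, ∀ V ∈ Matrix.unitaryGroup (Fin n) ℂ,
      ν (U * X * V) = ν X)
    (S T : Matrix (Fin n) (Fin n) ℂ) (hS : IsUnit S) (hT : IsUnit T) :
    ν (((Matrix.trace A - Matrix.trace B) / n) • (1 : Matrix (Fin n) (Fin n) ℂ)) ≤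
      ν (S⁻¹ * A * S - T⁻¹ * B * T) :=
  stmt9_general hn A B ν hνadd hνsmul hνinv S T hS hT
end

section
/- Let A = diag(2, −1, −1) ∈ M_3 and B the 3×3 nilpotent Jordan block with ones on the superdiagonal. Then inf over invertible S, T of ‖S^{-1} A S − T^{-1} B T‖ = 0 (Frobenius norm): there exist invertible S, T with S^{-1}AS − T^{-1}BT a rank-two nilpotent matrix, and any nonzero nilpotent orbit has 0 in its closure. -/
/-!
Both orbits contain explicit representatives: `A` is conjugate to the matrix `J` with zero
diagonal and all other entries `1` (its eigenvalues are `2, -1, -1`), and `B` to the strictly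
upper triangular all-ones matrix `U`. Hence `J - U` is a difference in question; it is the strictly
lower triangular all-ones matrix `N`, which is nilpotent of rank two. Conjugating a difference
`S⁻¹AS - T⁻¹BT` by `V` gives the difference for `SV, TV`, and conjugating a strictly lower
triangular `N` by `diag(1, ε⁻¹, ε⁻²)` multiplies its `k`-th subdiagonal by `εᵏ`; letting `ε → 0`
makes the differences, and so their Frobenius norms, tend to `0`.
-/

open Matrix

/-- Frobenius norm of a complex matrix. -/
noncomputable def frob {n : ℕ} (X : Matrix (Fin n) (Fin n) ℂ) : ℝ :=
  Real.sqrt (Matrix.trace (Xᴴ * X)).re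

open Filter Topology

section Conjugation

variable {n R : Type*} [Fintype n] [DecidableEq n] [CommRing R]

lemma Matrix.inv_mul_mul_eq_of_mul_eq {A J P : Matrix n n R} (hP : IsUnit P)
    (h : A * P = P * J) : P⁻¹ * A * P = J := by
  rw [Matrix.mul_assoc, h, ← Matrix.mul_assoc, nonsing_inv_mul _ ((isUnit_iff_isUnit_det P).1 hP),
    Matrix.one_mul]

lemma Matrix.inv_mul_sub_mul_conj (A B S T V : Matrix n n R) :
    V⁻¹ * (S⁻¹ * A * S - T⁻¹ * B * T) * V =
      (S * V)⁻¹ * A * (S * V) - (T * V)⁻¹ * B * (T * V) := by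
  simp only [Matrix.mul_inv_rev, Matrix.mul_sub, Matrix.sub_mul, Matrix.mul_assoc]

end Conjugation

section Scaling

variable {n : ℕ} {K : Type*} [Field K]

lemma Matrix.exists_inv_mul_mul_eq_pow_sub_mul {N : Matrix (Fin n) (Fin n) K}
    (hN : ∀ i j, i < j → N i j = 0) {ε : K} (hε : ε ≠ 0) :
    ∃ V : Matrix (Fin n) (Fin n) K, IsUnit V ∧
      V⁻¹ * N * V = of fun i j : Fin n => ε ^ ((i : ℕ) - j) * N i j := by
  have hV : IsUnit (diagonal fun i : Fin n => ε⁻¹ ^ (i : ℕ)) := by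
    rw [isUnit_iff_isUnit_det, det_diagonal]
    exact (Finset.prod_ne_zero_iff.2 fun i _ => pow_ne_zero _ (inv_ne_zero hε)).isUnit
  refine ⟨_, hV, inv_mul_mul_eq_of_mul_eq hV ?_⟩
  ext i j
  rw [mul_diagonal, diagonal_mul, of_apply]
  rcases lt_or_ge i j with hij | hji
  · simp [hN i j hij]
  · rw [← pow_sub_mul_pow ε⁻¹ (Fin.le_iff_val_le_val.1 hji), inv_pow, inv_pow]
    field_simp

lemma Matrix.tendsto_of_pow_sub_mul [TopologicalSpace K] [IsTopologicalRing K]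
    {N : Matrix (Fin n) (Fin n) K} (hN : ∀ i j, i ≤ j → N i j = 0) :
    Tendsto (fun ε : K => of fun i j : Fin n => ε ^ ((i : ℕ) - j) * N i j) (𝓝 0) (𝓝 0) := by
  have hcont : Continuous fun ε : K => of fun i j : Fin n => ε ^ ((i : ℕ) - j) * N i j := by
    fun_prop
  convert hcont.tendsto 0 using 2
  ext i j
  rcases le_or_gt i j with hij | hji
  · simp [hN i j hij]
  · simp [Nat.sub_ne_zero_of_lt hji]

end Scaling

lemma continuous_frob {n : ℕ} : Continuous (frob : Matrix (Fin n) (Fin n) ℂ → ℝ) := by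
  unfold frob
  fun_prop

lemma frob_zero {n : ℕ} : frob (0 : Matrix (Fin n) (Fin n) ℂ) = 0 := by
  simp [frob]

lemma Real.sInf_eq_zero_of_tendsto {α : Type*} {l : Filter α} [l.NeBot] {X : Set ℝ}
    (hX : ∀ x ∈ X, 0 ≤ x) {f : α → ℝ} (hfX : ∀ᶠ a in l, f a ∈ X) (hf : Tendsto f l (𝓝 0)) :
    sInf X = 0 :=
  le_antisymm (ge_of_tendsto hf (hfX.mono fun _ ha => csInf_le ⟨0, hX⟩ ha)) (Real.sInf_nonneg hX)

lemma sInf_frob_conj_sub_conj_eq_zero {n : ℕ} {A B D : Matrix (Fin n) (Fin n) ℂ}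
    (hD : ∃ S T : Matrix (Fin n) (Fin n) ℂ, IsUnit S ∧ IsUnit T ∧
      S⁻¹ * A * S - T⁻¹ * B * T = D)
    (hD_lower : ∀ i j, i ≤ j → D i j = 0) :
    sInf {x | ∃ S T : Matrix (Fin n) (Fin n) ℂ, IsUnit S ∧ IsUnit T ∧
      x = frob (S⁻¹ * A * S - T⁻¹ * B * T)} = 0 := by
  obtain ⟨S, T, hS, hT, rfl⟩ := hD
  refine Real.sInf_eq_zero_of_tendsto (l := 𝓝[≠] 0)
    (f := fun ε => frob (of fun i j : Fin n => ε ^ ((i : ℕ) - j) *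
      (S⁻¹ * A * S - T⁻¹ * B * T) i j)) ?_ ?_ ?_
  · rintro _ ⟨S, T, -, -, rfl⟩
    exact Real.sqrt_nonneg _
  · filter_upwards [self_mem_nhdsWithin] with ε hε
    obtain ⟨V, hV, hconj⟩ :=
      exists_inv_mul_mul_eq_pow_sub_mul (fun i j hij => hD_lower i j hij.le) hε
    exact ⟨S * V, T * V, hS.mul hV, hT.mul hV, by rw [← hconj, inv_mul_sub_mul_conj]⟩
  · exact (continuous_frob.tendsto' 0 0 frob_zero).comp
      ((tendsto_of_pow_sub_mul hD_lower).mono_left nhdsWithin_le_nhds)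

def strictLowerOnes : Matrix (Fin 3) (Fin 3) ℂ := !![0, 0, 0; 1, 0, 0; 1, 1, 0]

lemma strictLowerOnes_apply_of_le {i j : Fin 3} (hij : i ≤ j) : strictLowerOnes i j = 0 := by
  fin_cases i <;> fin_cases j <;> simp_all [strictLowerOnes]

lemma strictLowerOnes_pow_three : strictLowerOnes ^ 3 = 0 := by
  ext i j
  fin_cases i <;> fin_cases j <;> simp [strictLowerOnes, pow_succ, mul_apply, Fin.sum_univ_three]

lemma rank_strictLowerOnes : strictLowerOnes.rank = 2 := by
  have hE : (!![0, 1, 0; 0, -1, 1; 1, 0, 0] : Matrix (Fin 3) (Fin 3) ℂ) * strictLowerOnes =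
      diagonal ![1, 1, 0] := by
    ext i j
    fin_cases i <;> fin_cases j <;> simp [strictLowerOnes, mul_apply, Fin.sum_univ_three]
  have hdet : IsUnit (!![0, 1, 0; 0, -1, 1; 1, 0, 0] : Matrix (Fin 3) (Fin 3) ℂ).det := by
    simp [det_fin_three]
  rw [← rank_mul_eq_right_of_isUnit_det _ _ hdet, hE, rank_diagonal, Fintype.card_subtype,
    Finset.card_filter, Fin.sum_univ_three]
  simp

lemma exists_conj_sub_conj_eq_strictLowerOnes :
    ∃ S T : Matrix (Fin 3) (Fin 3) ℂ, IsUnit S ∧ IsUnit T ∧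
      S⁻¹ * diagonal ![2, -1, -1] * S - T⁻¹ * !![0, 1, 0; 0, 0, 1; 0, 0, 0] * T =
        strictLowerOnes := by
  -- the rows of `S` are eigenvectors of `J` for the eigenvalues `2, -1, -1`
  have hS : IsUnit (!![1, 1, 1; 1, -1, 0; 1, 0, -1] : Matrix (Fin 3) (Fin 3) ℂ) := by
    rw [isUnit_iff_isUnit_det, isUnit_iff_ne_zero]
    simp [det_fin_three]
    norm_num
  have hT : IsUnit (!![1, -1, 0; 0, 1, 0; 0, 0, 1] : Matrix (Fin 3) (Fin 3) ℂ) := by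
    rw [isUnit_iff_isUnit_det, isUnit_iff_ne_zero]
    simp [det_fin_three]
  refine ⟨_, _, hS, hT, ?_⟩
  rw [inv_mul_mul_eq_of_mul_eq hS (J := !![0, 1, 1; 1, 0, 1; 1, 1, 0]),
    inv_mul_mul_eq_of_mul_eq hT (J := !![0, 1, 1; 0, 0, 1; 0, 0, 0])]
  all_goals
    ext i j
    fin_cases i <;> fin_cases j <;> simp [strictLowerOnes, mul_apply, Fin.sum_univ_three] <;>
      norm_num

theorem stmt13
    (A : Matrix (Fin 3) (Fin 3) ℂ) (hA : A = Matrix.diagonal ![2, -1, -1])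
    (B : Matrix (Fin 3) (Fin 3) ℂ) (hB : B = !![0, 1, 0; 0, 0, 1; 0, 0, 0]) :
    (∃ S T : Matrix (Fin 3) (Fin 3) ℂ, IsUnit S ∧ IsUnit T ∧
        (S⁻¹ * A * S - T⁻¹ * B * T) ^ 3 = 0 ∧ (S⁻¹ * A * S - T⁻¹ * B * T).rank = 2) ∧
      sInf {x | ∃ S T : Matrix (Fin 3) (Fin 3) ℂ, IsUnit S ∧ IsUnit T ∧
          x = frob (S⁻¹ * A * S - T⁻¹ * B * T)} = 0 := by
  subst hA hB
  obtain ⟨S, T, hS, hT, hdiff⟩ := exists_conj_sub_conj_eq_strictLowerOnes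
  refine ⟨⟨S, T, hS, hT, ?_, ?_⟩, sInf_frob_conj_sub_conj_eq_zero ⟨S, T, hS, hT, hdiff⟩
    fun _ _ => strictLowerOnes_apply_of_le⟩
  · rw [hdiff, strictLowerOnes_pow_three]
  · rw [hdiff, rank_strictLowerOnes]
end

section
/- Let x = (x_1, ..., x_n) and y = (y_1, ..., y_n) be nonnegative vectors with x weakly majorized by y (for each k, the sum of the k largest entries of x is at most that of y). Then for every unitarily invariant norm ‖·‖ on M_n: ‖diag(x_1, ..., x_n)‖ ≤ ‖diag(y_1, ..., y_n)‖. -/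
open Matrix

/-- The maximal sum of `k` entries of a vector: for nonnegative vectors this is the
sum of the `k` largest entries. -/
noncomputable def maxSum {n : ℕ} (v : Fin n → ℝ) (k : ℕ) : ℝ :=
  sSup {x | ∃ s : Finset (Fin n), s.card = k ∧ x = ∑ i ∈ s, v i}

/-!
The map `v ↦ ν (diagonal v)` is convex, invariant under permutations of `v`, and does not
increase when entries of `v` are replaced by zero: with `S = diagonal (±1)` unitary,
`diagonal (1ₛ v)` is the average of `diagonal v` and `S * diagonal v`. By the maximum principle
for convex functions it therefore suffices that `x` lies in the convex hull of the vectors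
obtained from a permutation `y ∘ σ` by zeroing some entries. Otherwise a separating functional
`c` would satisfy `⟪c, x⟫ > ⟪c, 1_{c > 0} (y ∘ σ)⟫ = ⟪c⁺, y ∘ σ⟫` for every `σ`. But
`⟪c, x⟫ ≤ ⟪c⁺, x⟫` as `x ≥ 0`, and summation by parts along the decreasing order of `c⁺`
turns weak majorization into `⟪c⁺, x⟫ ≤ ⟪c⁺, y ∘ σ⟫` for the `σ` matching the decreasing
orders of `c⁺` and `y`.
-/

open Finset Equiv

theorem Fin.val_le_of_strictMono {k n : ℕ} {f : Fin k → Fin n} (hf : StrictMono f) (j : Fin k) :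
    (j : ℕ) ≤ f j := by
  simpa using card_le_card_of_injOn f (s := Iic j) (t := Iic (f j))
    (fun i hi => by simpa using hf.monotone (by simpa using hi)) hf.injective.injOn

theorem Finset.sum_le_sum_castLE_of_antitone {k n : ℕ} {w : Fin n → ℝ} (hw : Antitone w)
    (hk : k ≤ n) {s : Finset (Fin n)} (hs : #s = k) :
    ∑ i ∈ s, w i ≤ ∑ j : Fin k, w (Fin.castLE hk j) := by
  rw [← map_orderEmbOfFin_univ s hs, sum_map]
  exact sum_le_sum fun j _ => hw (Fin.val_le_of_strictMono (s.orderEmbOfFin hs).strictMono j)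

theorem Finset.sum_range_mul_le_sum_range_mul_of_antitone {a u w : ℕ → ℝ} {m : ℕ} (ha : Antitone a)
    (ham : 0 ≤ a m) (h : ∀ k ≤ m, ∑ i ∈ range k, u i ≤ ∑ i ∈ range k, w i) :
    ∑ i ∈ range m, a i * u i ≤ ∑ i ∈ range m, a i * w i := by
  have hparts := fun v : ℕ → ℝ => sum_range_by_parts a v m
  simp only [smul_eq_mul] at hparts
  rw [hparts, hparts]
  refine sub_le_sub (mul_le_mul_of_nonneg_left (h m le_rfl) (ham.trans (ha (m.sub_le 1))))
    (sum_le_sum fun i hi => mul_le_mul_of_nonpos_left (h (i + 1) ?_) (sub_nonpos.2 (ha i.le_succ)))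
  have := mem_range.1 hi
  omega

section MaxSum

variable {n : ℕ}

theorem sum_le_maxSum (v : Fin n → ℝ) {k : ℕ} {s : Finset (Fin n)} (hs : #s = k) :
    ∑ i ∈ s, v i ≤ maxSum v k := by
  refine le_csSup ((Set.finite_range fun s : Finset (Fin n) => ∑ i ∈ s, v i).subset ?_).bddAbove
    ⟨s, hs, rfl⟩
  rintro _ ⟨s, -, rfl⟩
  exact ⟨s, rfl⟩

theorem maxSum_le (v : Fin n → ℝ) {k : ℕ} (hk : k ≤ n) {B : ℝ}
    (h : ∀ s : Finset (Fin n), #s = k → ∑ i ∈ s, v i ≤ B) : maxSum v k ≤ B := by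
  obtain ⟨s, -, hs⟩ := exists_subset_card_eq (s := (univ : Finset (Fin n))) (by simpa using hk)
  exact csSup_le ⟨_, s, hs, rfl⟩ fun _ ⟨s, hs, hB⟩ => hB ▸ h s hs

theorem sum_comp_le_maxSum (v : Fin n → ℝ) {k : ℕ} {f : Fin k → Fin n}
    (hf : Function.Injective f) : ∑ j, v (f j) ≤ maxSum v k := by
  simpa using sum_le_maxSum v (s := univ.map ⟨f, hf⟩) (by simp)

theorem maxSum_le_sum_castLE (v : Fin n → ℝ) {τ : Perm (Fin n)} (hτ : Antitone (v ∘ τ))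
    {k : ℕ} (hk : k ≤ n) : maxSum v k ≤ ∑ j : Fin k, v (τ (Fin.castLE hk j)) := by
  refine maxSum_le v hk fun s hs => ?_
  simpa [sum_map] using sum_le_sum_castLE_of_antitone hτ hk (s := s.map τ.symm.toEmbedding)
    (by simpa using hs)

end MaxSum

section Rearrangement

variable {n : ℕ}

noncomputable def extendZero (v : Fin n → ℝ) (i : ℕ) : ℝ :=
  if h : i < n then v ⟨i, h⟩ else 0

@[simp] theorem extendZero_val (v : Fin n → ℝ) (i : Fin n) : extendZero v i = v i := by
  simp [extendZero]

@[simp] theorem extendZero_self (v : Fin n → ℝ) : extendZero v n = 0 := by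
  simp [extendZero]

theorem antitone_extendZero {v : Fin n → ℝ} (hv : Antitone v) (hv₀ : 0 ≤ v) :
    Antitone (extendZero v) := by
  intro i j hij
  unfold extendZero
  split_ifs with hj hi hi
  · exact hv (Fin.mk_le_mk.2 hij)
  · omega
  · exact hv₀ _
  · rfl

theorem sum_range_extendZero (v : Fin n → ℝ) {k : ℕ} (hk : k ≤ n) :
    ∑ i ∈ range k, extendZero v i = ∑ j : Fin k, v (Fin.castLE hk j) := by
  rw [← Fin.sum_univ_eq_sum_range]
  simp [extendZero, Fin.castLE, (Fin.is_lt _).trans_le hk]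

theorem sum_range_extendZero_mul (a b : Fin n → ℝ) :
    ∑ i ∈ range n, extendZero a i * extendZero b i = ∑ i, a i * b i := by
  rw [← Fin.sum_univ_eq_sum_range (fun i => extendZero a i * extendZero b i)]
  simp

theorem antitone_comp_sort_neg (v : Fin n → ℝ) : Antitone (v ∘ Tuple.sort (-v)) :=
  fun _ _ h => neg_le_neg_iff.1 (Tuple.monotone_sort (-v) h)

theorem exists_perm_sum_mul_le {x y : Fin n → ℝ} (hmaj : ∀ k ≤ n, maxSum x k ≤ maxSum y k)
    {d : Fin n → ℝ} (hd : 0 ≤ d) : ∃ σ : Perm (Fin n), ∑ i, d i * x i ≤ ∑ i, d i * y (σ i) := by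
  set π := Tuple.sort (-d)
  set τ := Tuple.sort (-y)
  have hprefix : ∀ k ≤ n, ∑ i ∈ range k, extendZero (x ∘ π) i
      ≤ ∑ i ∈ range k, extendZero (y ∘ τ) i := fun k hk => by
    rw [sum_range_extendZero _ hk, sum_range_extendZero _ hk]
    calc ∑ j : Fin k, x (π (Fin.castLE hk j))
        ≤ maxSum x k := sum_comp_le_maxSum x (π.injective.comp (Fin.castLE_injective hk))
      _ ≤ maxSum y k := hmaj k hk
      _ ≤ _ := maxSum_le_sum_castLE y (antitone_comp_sort_neg y) hk
  have key := sum_range_mul_le_sum_range_mul_of_antitone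
    (antitone_extendZero (antitone_comp_sort_neg d) fun i => hd (π i)) (extendZero_self _).ge
    hprefix
  rw [sum_range_extendZero_mul, sum_range_extendZero_mul] at key
  refine ⟨π.symm.trans τ, ?_⟩
  rw [← Equiv.sum_comp π, ← Equiv.sum_comp π (fun i => d i * y _)]
  simpa using key

end Rearrangement

theorem mem_convexHull_indicator_comp_perm {n : ℕ} {x y : Fin n → ℝ} (hx : 0 ≤ x)
    (hmaj : ∀ k ≤ n, maxSum x k ≤ maxSum y k) :
    x ∈ convexHull ℝ (Set.range fun p : Perm (Fin n) × Finset (Fin n) =>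
      (p.2 : Set (Fin n)).indicator (y ∘ p.1)) := by
  by_contra hx'
  obtain ⟨f, u, hf, hfx⟩ := geometric_hahn_banach_closed_point (convex_convexHull ℝ _)
    ((Set.finite_range _).isClosed_convexHull (𝕜 := ℝ)) hx'
  set c : Fin n → ℝ := fun i => f (Pi.single i 1)
  have hf_apply (v : Fin n → ℝ) : f v = ∑ i, v i * c i := by
    rw [← f.coe_coe, LinearMap.pi_apply_eq_sum_univ]
    refine sum_congr rfl fun i _ => ?_
    rw [smul_eq_mul, ContinuousLinearMap.coe_coe]
    congr 2
    ext j
    simp [Pi.single_apply, eq_comm]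
  obtain ⟨σ, hσ⟩ := exists_perm_sum_mul_le hmaj (d := fun i => max (c i) 0)
    fun i => le_max_right _ _
  set s : Finset (Fin n) := {i | 0 < c i}
  have hvertex := hf _ (subset_convexHull ℝ _ ⟨(σ, s), rfl⟩)
  have hx_le : f x ≤ ∑ i, max (c i) 0 * x i := by
    rw [hf_apply]
    exact sum_le_sum fun i _ => by
      rw [mul_comm]; exact mul_le_mul_of_nonneg_right (le_max_left _ _) (hx i)
  have hvertex_eq : f ((s : Set (Fin n)).indicator (y ∘ σ)) = ∑ i, max (c i) 0 * y (σ i) := by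
    rw [hf_apply]
    refine sum_congr rfl fun i _ => ?_
    by_cases hi : 0 < c i
    · simp [s, hi, max_eq_left hi.le, mul_comm]
    · simp [s, hi, max_eq_right (not_lt.1 hi)]
  linarith

section UnitaryGroup

variable {ι R : Type*} [Fintype ι] [DecidableEq ι] [CommRing R]

theorem Matrix.permMatrix_mem_unitaryGroup_s17 [StarRing R] (σ : Perm ι) :
    σ.permMatrix R ∈ unitaryGroup ι R := by
  rw [mem_unitaryGroup_iff', star_eq_conjTranspose, conjTranspose_permMatrix, ← permMatrix_mul,
    mul_inv_cancel, permMatrix_one]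

theorem Matrix.diagonal_mem_unitaryGroup [StarRing R] {d : ι → R} (hd : ∀ i, star (d i) * d i = 1) :
    diagonal d ∈ unitaryGroup ι R := by
  rw [mem_unitaryGroup_iff', star_eq_conjTranspose, diagonal_conjTranspose, diagonal_mul_diagonal]
  simp only [Pi.star_apply, hd]
  exact diagonal_one

theorem Matrix.permMatrix_mul_diagonal_mul_permMatrix_inv (σ : Perm ι) (d : ι → R) :
    σ.permMatrix R * diagonal d * (σ⁻¹).permMatrix R = diagonal (d ∘ σ) := by
  rw [PEquiv.toMatrix_toPEquiv_mul, PEquiv.mul_toMatrix_toPEquiv, Perm.inv_def, symm_symm,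
    submatrix_submatrix, Function.comp_id, Function.id_comp, submatrix_diagonal_equiv]

end UnitaryGroup

section UnitarilyInvariant

variable {ι : Type*} [DecidableEq ι] {ν : Matrix ι ι ℂ → ℝ}

theorem convexOn_diagonal (hadd : ∀ X Y, ν (X + Y) ≤ ν X + ν Y)
    (hsmul : ∀ (c : ℂ) X, ν (c • X) = ‖c‖ * ν X) :
    ConvexOn ℝ Set.univ fun v : ι → ℝ => ν (diagonal fun i => (v i : ℂ)) := by
  refine ⟨convex_univ, fun v _ w _ a b ha hb _ => ?_⟩
  have hdiag : (diagonal fun i => ((a • v + b • w) i : ℂ))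
      = (a : ℂ) • diagonal (fun i => (v i : ℂ)) + (b : ℂ) • diagonal (fun i => (w i : ℂ)) := by
    rw [← diagonal_smul, ← diagonal_smul, diagonal_add]
    congr 1
    ext i
    simp
  calc ν (diagonal fun i => ((a • v + b • w) i : ℂ))
      ≤ ν ((a : ℂ) • diagonal fun i => (v i : ℂ)) + ν ((b : ℂ) • diagonal fun i => (w i : ℂ)) :=
        hdiag ▸ hadd _ _
    _ = a * ν (diagonal fun i => (v i : ℂ)) + b * ν (diagonal fun i => (w i : ℂ)) := by
      rw [hsmul, hsmul, Complex.norm_real, Complex.norm_real, Real.norm_of_nonneg ha,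
        Real.norm_of_nonneg hb]

theorem apply_diagonal_comp_perm [Fintype ι]
    (hinv : ∀ X, ∀ U ∈ unitaryGroup ι ℂ, ∀ V ∈ unitaryGroup ι ℂ, ν (U * X * V) = ν X)
    (σ : Perm ι) (d : ι → ℂ) :
    ν (diagonal (d ∘ σ)) = ν (diagonal d) := by
  rw [← permMatrix_mul_diagonal_mul_permMatrix_inv σ d]
  exact hinv _ _ (permMatrix_mem_unitaryGroup_s17 σ) _ (permMatrix_mem_unitaryGroup_s17 σ⁻¹)

theorem apply_diagonal_indicator_le [Fintype ι] (hadd : ∀ X Y, ν (X + Y) ≤ ν X + ν Y)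
    (hsmul : ∀ (c : ℂ) X, ν (c • X) = ‖c‖ * ν X)
    (hinv : ∀ X, ∀ U ∈ unitaryGroup ι ℂ, ∀ V ∈ unitaryGroup ι ℂ, ν (U * X * V) = ν X)
    (s : Set ι) [DecidablePred (· ∈ s)] (v : ι → ℝ) :
    ν (diagonal fun i => ((s.indicator v i : ℝ) : ℂ)) ≤ ν (diagonal fun i => (v i : ℂ)) := by
  set D := diagonal fun i => (v i : ℂ)
  set S : Matrix ι ι ℂ := diagonal fun i => if i ∈ s then 1 else -1
  have hS : S ∈ unitaryGroup ι ℂ := diagonal_mem_unitaryGroup fun i => by split_ifs <;> simp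
  have hhalf : (diagonal fun i => ((s.indicator v i : ℝ) : ℂ)) = (2⁻¹ : ℂ) • (D + S * D) := by
    rw [diagonal_mul_diagonal, diagonal_add, ← diagonal_smul]
    congr 1
    ext i
    by_cases hi : i ∈ s <;> simp [hi]
    ring
  have hSD : ν (S * D) = ν D := by simpa using hinv D S hS 1 (one_mem _)
  calc ν (diagonal fun i => ((s.indicator v i : ℝ) : ℂ))
      = 2⁻¹ * ν (D + S * D) := by rw [hhalf, hsmul, norm_inv, Complex.norm_two]
    _ ≤ 2⁻¹ * (ν D + ν (S * D)) := by gcongr; exact hadd _ _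
    _ = ν D := by rw [hSD]; ring

end UnitarilyInvariant

theorem stmt17_general {n : ℕ} (x y : Fin n → ℝ) (hx : ∀ i, 0 ≤ x i)
    (hmaj : ∀ k : ℕ, k ≤ n → maxSum x k ≤ maxSum y k)
    (ν : Matrix (Fin n) (Fin n) ℂ → ℝ)
    (hνadd : ∀ X Y, ν (X + Y) ≤ ν X + ν Y)
    (hνsmul : ∀ (c : ℂ) X, ν (c • X) = ‖c‖ * ν X)
    (hνinv : ∀ X, ∀ U ∈ Matrix.unitaryGroup (Fin n) ℂ, ∀ V ∈ Matrix.unitaryGroup (Fin n) ℂ,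
      ν (U * X * V) = ν X) :
    ν (Matrix.diagonal (fun i => (x i : ℂ))) ≤ ν (Matrix.diagonal (fun i => (y i : ℂ))) := by
  obtain ⟨_, ⟨⟨σ, s⟩, rfl⟩, hx_le⟩ := (convexOn_diagonal hνadd hνsmul).exists_ge_of_mem_convexHull
    (Set.subset_univ _) (mem_convexHull_indicator_comp_perm hx hmaj)
  calc ν (diagonal fun i => (x i : ℂ))
      ≤ ν (diagonal fun i => (((s : Set (Fin n)).indicator (y ∘ σ) i : ℝ) : ℂ)) := hx_le
    _ ≤ ν (diagonal fun i => (y (σ i) : ℂ)) := apply_diagonal_indicator_le hνadd hνsmul hνinv _ _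
    _ = ν (diagonal fun i => (y i : ℂ)) := apply_diagonal_comp_perm hνinv σ fun i => (y i : ℂ)

theorem stmt17 {n : ℕ} (x y : Fin n → ℝ) (hx : ∀ i, 0 ≤ x i) (hy : ∀ i, 0 ≤ y i)
    (hmaj : ∀ k : ℕ, k ≤ n → maxSum x k ≤ maxSum y k)
    (ν : Matrix (Fin n) (Fin n) ℂ → ℝ)
    (hν₀ : ∀ X, ν X = 0 ↔ X = 0)
    (hνadd : ∀ X Y, ν (X + Y) ≤ ν X + ν Y)
    (hνsmul : ∀ (c : ℂ) X, ν (c • X) = ‖c‖ * ν X)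
    (hνinv : ∀ X, ∀ U ∈ Matrix.unitaryGroup (Fin n) ℂ, ∀ V ∈ Matrix.unitaryGroup (Fin n) ℂ,
      ν (U * X * V) = ν X) :
    ν (Matrix.diagonal (fun i => (x i : ℂ))) ≤ ν (Matrix.diagonal (fun i => (y i : ℂ))) :=
  stmt17_general x y hx hmaj ν hνadd hνsmul hνinv
end
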